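/- arXiv:2206.13853 — 7 statements merged into one kernel-verified Lean document; each statement's English description precedes it below -/
import Mathlib

section
/- Let N be a finitely generated torsion-free nilpotent group and H a finite index subgroup of N. Then the centralizer of H in N equals the center of N. -/
/-!
If `g` centralizes `H` and `n ∈ N`, some power `n ^ k` with `k ≠ 0` lies in `H`, so `g` commutes
with `n ^ k`. In the centralizer of `n ^ k`, again torsion-free nilpotent, the element `n ^ k` is
central, so it suffices that the center of a torsion-free nilpotent group is isolated. This follows
from torsion-freeness of the factors `Z_{i+1} / Z_i` of the upper central series, proved by
induction on `i`: for `x ∈ Z_{i+2}` the commutator `⁅x, g⁆` is central modulo `Z_i`, whence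
`⁅x ^ m, g⁆ ≡ ⁅x, g⁆ ^ m` there.
-/

open scoped commutatorElement

theorem commutatorElement_pow_left_of_commute {G : Type*} [Group G] {a b : G}
    (h : Commute ⁅a, b⁆ a) (m : ℕ) : ⁅a ^ m, b⁆ = ⁅a, b⁆ ^ m := by
  induction m with
  | zero => simp
  | succ m ih =>
    rw [pow_succ', commutatorElement_mul_left_eq_conj_mul, ih, ← (h.pow_left m).eq, pow_succ]
    group

namespace Subgroup

variable {G : Type*} [Group G]

theorem commutatorElement_pow_left_mem_upperCentralSeries_iff {i : ℕ} {x g : G}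
    (h : ⁅x, g⁆ ∈ upperCentralSeries G (i + 1)) (m : ℕ) :
    ⁅x ^ m, g⁆ ∈ upperCentralSeries G i ↔ ⁅x, g⁆ ^ m ∈ upperCentralSeries G i := by
  let π := QuotientGroup.mk' (upperCentralSeries G i)
  have hcomm : Commute ⁅π x, π g⁆ (π x) := by
    rw [← commutatorElement_eq_one_iff_commute, ← map_commutatorElement,
      ← map_commutatorElement, QuotientGroup.mk'_apply, QuotientGroup.eq_one_iff]
    exact mem_upperCentralSeries_succ_iff.1 h x
  rw [← QuotientGroup.eq_one_iff, ← QuotientGroup.eq_one_iff (⁅x, g⁆ ^ m)]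
  change π _ = 1 ↔ π _ = 1
  rw [map_commutatorElement, map_pow, map_pow, map_commutatorElement,
    commutatorElement_pow_left_of_commute hcomm]

theorem mem_upperCentralSeries_of_pow_mem (htf : ∀ g : G, g ≠ 1 → ¬IsOfFinOrder g)
    {i m : ℕ} (hm : m ≠ 0) {x : G} (hx : x ∈ upperCentralSeries G (i + 1))
    (hxm : x ^ m ∈ upperCentralSeries G i) : x ∈ upperCentralSeries G i := by
  induction i generalizing x with
  | zero =>
    rw [upperCentralSeries_zero, mem_bot] at hxm ⊢
    by_contra hx1
    exact htf x hx1 (isOfFinOrder_iff_pow_eq_one.2 ⟨m, Nat.pos_of_ne_zero hm, hxm⟩)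
  | succ i ih =>
    refine mem_upperCentralSeries_succ_iff.2 fun g ↦ ?_
    have hxg := mem_upperCentralSeries_succ_iff.1 hx g
    exact ih hxg ((commutatorElement_pow_left_mem_upperCentralSeries_iff hxg m).1
      (mem_upperCentralSeries_succ_iff.1 hxm g))

theorem mem_center_of_pow_mem_center [Group.IsNilpotent G]
    (htf : ∀ g : G, g ≠ 1 → ¬IsOfFinOrder g) {m : ℕ} (hm : m ≠ 0) {x : G}
    (hx : x ^ m ∈ center G) : x ∈ center G := by
  rw [← upperCentralSeries_one] at hx ⊢
  have descend : ∀ j, 1 ≤ j →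
      x ∈ upperCentralSeries G j → x ∈ upperCentralSeries G 1 := by
    intro j hj
    induction j, hj using Nat.le_induction with
    | base => exact id
    | succ j hj ih =>
      exact fun hxj ↦ ih (mem_upperCentralSeries_of_pow_mem htf hm hxj
        (upperCentralSeries_mono G hj hx))
  obtain ⟨c, hc⟩ := Group.IsNilpotent.nilpotent G
  refine descend (c + 1) (Nat.le_add_left 1 c) (upperCentralSeries_mono G c.le_succ ?_)
  simp [hc]

end Subgroup

open Subgroup

theorem Commute.of_pow_right_of_isNilpotent {G : Type*} [Group G] [Group.IsNilpotent G]
    (htf : ∀ g : G, g ≠ 1 → ¬IsOfFinOrder g) {m : ℕ} (hm : m ≠ 0) {x y : G}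
    (h : Commute x (y ^ m)) : Commute x y := by
  let T := centralizer {y ^ m}
  have hxT : x ∈ T := mem_centralizer_singleton_iff.2 h.eq
  have hyT : y ∈ T := mem_centralizer_singleton_iff.2 (Commute.self_pow y m).eq
  have htfT : ∀ t : T, t ≠ 1 → ¬IsOfFinOrder t := fun t ht hfin ↦
    htf t (by simpa using ht) (T.subtype.isOfFinOrder hfin)
  have hyc : (⟨y, hyT⟩ : T) ^ m ∈ center T := by
    rw [mem_center_iff]
    rintro ⟨t, ht⟩
    exact Subtype.ext (mem_centralizer_singleton_iff.1 ht)
  exact congrArg Subtype.val <|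
    mem_center_iff.1 (mem_center_of_pow_mem_center htfT hm hyc) ⟨x, hxT⟩

theorem centralizer_of_finiteIndex_eq_center_general (N : Type*) [Group N]
    (htf : ∀ g : N, g ≠ 1 → ¬IsOfFinOrder g) [Group.IsNilpotent N]
    (H : Subgroup N) (hfin : H.FiniteIndex) :
    Subgroup.centralizer (H : Set N) = Subgroup.center N := by
  refine le_antisymm (fun g hg ↦ mem_center_iff.2 fun n ↦ ?_) (center_le_centralizer _)
  obtain ⟨k, hk, -, hnk⟩ := exists_pow_mem_of_index_ne_zero hfin.index_ne_zero n
  have hgk : Commute g (n ^ k) := (mem_centralizer_iff.1 hg _ hnk).symm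
  exact (hgk.of_pow_right_of_isNilpotent htf hk.ne').symm.eq

/-- Let `N` be a finitely generated torsion-free nilpotent group and `H` a finite index
subgroup of `N`. Then the centralizer of `H` in `N` equals the center of `N`. -/
theorem centralizer_of_finiteIndex_eq_center (N : Type*) [Group N]
    (hfg : Group.FG N) (htf : ∀ g : N, g ≠ 1 → ¬IsOfFinOrder g) [Group.IsNilpotent N]
    (H : Subgroup N) (hfin : H.FiniteIndex) :
    Subgroup.centralizer (H : Set N) = Subgroup.center N :=
  centralizer_of_finiteIndex_eq_center_general N htf H hfin
end

section
/- Let N be a finitely generated torsion-free nilpotent group, φ ∈ End(N), and k ∈ ℕ such that ker φ^k = ker φ^(2k). If im φ^k is a normal subgroup of N, then the subgroup generated by im φ^k and ker φ^k is isomorphic to the direct product (im φ^k) × (ker φ^k). -/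
/-!
The kernel condition forces `im φ^k ∩ ker φ^k = 1`: if `φ^k y` lies in `ker φ^k` then `y` lies in
`ker φ^(2k) = ker φ^k`, so `φ^k y = 1`. Two normal subgroups that intersect trivially commute
elementwise, so multiplication `im φ^k × ker φ^k → N` is an injective homomorphism onto their join.
-/

namespace Subgroup

variable {G : Type*} [Group G]

noncomputable def supMulEquivProdOfDisjoint (H K : Subgroup G) (hH : H.Normal) (hK : K.Normal)
    (hHK : Disjoint H K) : ↥(H ⊔ K) ≃* H × K :=
  have comm : ∀ (h : H) (k : K), Commute (H.subtype h) (K.subtype k) := fun h k =>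
    commute_of_normal_of_disjoint H K hH hK hHK _ _ h.2 k.2
  have hinj : Function.Injective (H.subtype.noncommCoprod K.subtype comm) :=
    (MonoidHom.noncommCoprod_injective _ _ comm).2
      ⟨H.subtype_injective, K.subtype_injective, by rwa [range_subtype, range_subtype]⟩
  have hrange : (H.subtype.noncommCoprod K.subtype comm).range = H ⊔ K := by
    rw [MonoidHom.noncommCoprod_range, range_subtype, range_subtype]
  (MulEquiv.subgroupCongr hrange.symm).trans (MonoidHom.ofInjective hinj).symm

end Subgroup

namespace Monoid.End

variable {G : Type*} [Group G]

theorem disjoint_range_ker_of_ker_eq_ker_sq (f : Monoid.End G)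
    (h : MonoidHom.ker f = MonoidHom.ker (f ^ 2 : Monoid.End G)) :
    Disjoint (MonoidHom.range f) (MonoidHom.ker f) := by
  rw [Subgroup.disjoint_def]
  rintro - ⟨y, rfl⟩ hfy
  have hy : y ∈ MonoidHom.ker (f ^ 2 : Monoid.End G) := by
    rw [pow_two]
    exact hfy
  rwa [← h] at hy

end Monoid.End

theorem range_sup_ker_mulEquiv_prod_general (N : Type*) [Group N]
    (φ : Monoid.End N) (k : ℕ)
    (hker : MonoidHom.ker (φ ^ k : Monoid.End N) = MonoidHom.ker (φ ^ (2 * k) : Monoid.End N))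
    (hnorm : (MonoidHom.range (φ ^ k : Monoid.End N)).Normal) :
    Nonempty
      ((↥(MonoidHom.range (φ ^ k : Monoid.End N) ⊔ MonoidHom.ker (φ ^ k : Monoid.End N))) ≃*
        (↥(MonoidHom.range (φ ^ k : Monoid.End N)) ×
          ↥(MonoidHom.ker (φ ^ k : Monoid.End N)))) := by
  rw [mul_comm, pow_mul] at hker
  exact ⟨Subgroup.supMulEquivProdOfDisjoint _ _ hnorm (MonoidHom.normal_ker _)
    ((φ ^ k).disjoint_range_ker_of_ker_eq_ker_sq hker)⟩

/-- If `ker φ^k = ker φ^(2k)` and `im φ^k` is normal in `N`, then the subgroup generated by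
`im φ^k` and `ker φ^k` is isomorphic to the direct product `im φ^k × ker φ^k`. -/
theorem range_sup_ker_mulEquiv_prod (N : Type*) [Group N]
    (hfg : Group.FG N) (htf : ∀ g : N, g ≠ 1 → ¬IsOfFinOrder g) [Group.IsNilpotent N]
    (φ : Monoid.End N) (k : ℕ)
    (hker : MonoidHom.ker (φ ^ k : Monoid.End N) = MonoidHom.ker (φ ^ (2 * k) : Monoid.End N))
    (hnorm : (MonoidHom.range (φ ^ k : Monoid.End N)).Normal) :
    Nonempty
      ((↥(MonoidHom.range (φ ^ k : Monoid.End N) ⊔ MonoidHom.ker (φ ^ k : Monoid.End N))) ≃*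
        (↥(MonoidHom.range (φ ^ k : Monoid.End N)) ×
          ↥(MonoidHom.ker (φ ^ k : Monoid.End N)))) :=
  range_sup_ker_mulEquiv_prod_general N φ k hker hnorm
end

section
/- Let G₁, …, Gₙ be groups and G = G₁ × ⋯ × Gₙ. The monoid End(G) is isomorphic to the monoid M of n×n matrices (φᵢⱼ) where φᵢⱼ ∈ Hom(Gⱼ, Gᵢ) and for each i and all k ≠ l, [im φᵢₖ, im φᵢₗ] = 1, with matrix multiplication given by composition and pointwise product. -/
/-- The matrix monoid of endomorphisms of a direct product: matrices `(φᵢⱼ)` with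
`φᵢⱼ ∈ Hom(Gⱼ, Gᵢ)` such that for `k ≠ l` the images of `φᵢₖ` and `φᵢₗ` commute. -/
structure EndMatrix {n : ℕ} (G : Fin n → Type*) [∀ i, Group (G i)] where
  entry : ∀ i j : Fin n, G j →* G i
  comm : ∀ i k l : Fin n, k ≠ l → ∀ (x : G k) (y : G l),
    Commute (entry i k x) (entry i l y)

/-!
An endomorphism `φ` of `G = ∏ Gᵢ` is determined by its components `πᵢ ∘ φ ∘ eⱼ`, since every
`x ∈ G` is the ordered product of the pairwise commuting `eₗ (x l)`. Conversely, by the universal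
property of `MonoidHom.noncommPiCoprod`, a matrix with row-wise commuting images assembles row
by row into an endomorphism. The same decomposition
`φ (ψ (eⱼ g)) = ∏ₗ φ (eₗ (ψ (eⱼ g))ₗ)` shows that composition becomes matrix multiplication.
-/

namespace MonoidHom

variable {n : ℕ} {N : Fin n → Type*} [∀ i, Monoid (N i)] {M : Type*} [Monoid M]

theorem noncommPiCoprod_apply_eq_list_prod (ϕ : ∀ i, N i →* M)
    (hcomm : Pairwise fun i j => ∀ x y, Commute (ϕ i x) (ϕ j y)) (x : ∀ i, N i) :
    noncommPiCoprod ϕ hcomm x = ((List.finRange n).map fun l => ϕ l (x l)).prod := by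
  simp only [noncommPiCoprod_apply, Finset.noncommProd, Fin.univ_def, Multiset.map_coe,
    Multiset.noncommProd_coe]

theorem apply_eq_list_prod_mulSingle (f : (∀ i, N i) →* M) (x : ∀ i, N i) :
    f x = ((List.finRange n).map fun l => f (Pi.mulSingle l (x l))).prod := by
  conv_lhs => rw [← noncommPiCoprodEquiv.apply_symm_apply f]
  exact noncommPiCoprod_apply_eq_list_prod _ (noncommPiCoprodEquiv.symm f).2 x

end MonoidHom

namespace EndMatrix

variable {n : ℕ} {G : Fin n → Type*} [∀ i, Group (G i)]

@[ext]
theorem ext {A B : EndMatrix G} (h : ∀ i j g, A.entry i j g = B.entry i j g) : A = B := by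
  obtain ⟨a, _⟩ := A
  obtain ⟨b, _⟩ := B
  congr
  funext i j
  exact MonoidHom.ext (h i j)

def ofEnd (φ : Monoid.End (∀ i, G i)) : EndMatrix G where
  entry i j := (Pi.evalMonoidHom G i).comp ((φ : (∀ i, G i) →* ∀ i, G i).comp
    (MonoidHom.mulSingle G j))
  comm i _ _ hkl x y := ((Pi.mulSingle_commute hkl x y).map φ).map (Pi.evalMonoidHom G i)

@[simp]
theorem ofEnd_entry (φ : Monoid.End (∀ i, G i)) (i j : Fin n) (g : G j) :
    (ofEnd φ).entry i j g = φ (Pi.mulSingle j g) i :=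
  rfl

theorem pairwise_comm (A : EndMatrix G) (i : Fin n) :
    Pairwise fun k l => ∀ x y, Commute (A.entry i k x) (A.entry i l y) :=
  fun _ _ hkl => A.comm i _ _ hkl

def toEnd (A : EndMatrix G) : Monoid.End (∀ i, G i) :=
  MonoidHom.pi fun i => MonoidHom.noncommPiCoprod (A.entry i) (A.pairwise_comm i)

theorem toEnd_apply (A : EndMatrix G) (x : ∀ i, G i) (i : Fin n) :
    A.toEnd x i = ((List.finRange n).map fun l => A.entry i l (x l)).prod :=
  MonoidHom.noncommPiCoprod_apply_eq_list_prod (A.entry i) (A.pairwise_comm i) x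

theorem apply_eq_list_prod_ofEnd_entry (φ : Monoid.End (∀ i, G i)) (x : ∀ i, G i)
    (i : Fin n) : φ x i = ((List.finRange n).map fun l => (ofEnd φ).entry i l (x l)).prod :=
  ((Pi.evalMonoidHom G i).comp φ).apply_eq_list_prod_mulSingle x

theorem toEnd_ofEnd (φ : Monoid.End (∀ i, G i)) : toEnd (ofEnd φ) = φ := by
  ext x i
  rw [toEnd_apply, apply_eq_list_prod_ofEnd_entry]

theorem ofEnd_toEnd (A : EndMatrix G) : ofEnd (toEnd A) = A := by
  ext i j g
  exact MonoidHom.noncommPiCoprod_mulSingle (hcomm := A.pairwise_comm i) (A.entry i) j g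

def endEquiv : Monoid.End (∀ i, G i) ≃ EndMatrix G where
  toFun := ofEnd
  invFun := toEnd
  left_inv := toEnd_ofEnd
  right_inv := ofEnd_toEnd

theorem ofEnd_one_entry (i j : Fin n) (g : G j) :
    (ofEnd 1).entry i j g = if h : i = j then h ▸ g else 1 := by
  by_cases h : i = j
  · subst h
    simp
  · simp [h]

theorem ofEnd_mul_entry (φ ψ : Monoid.End (∀ i, G i)) (i j : Fin n) (g : G j) :
    (ofEnd (φ * ψ)).entry i j g =
      ((List.finRange n).map fun l => (ofEnd φ).entry i l ((ofEnd ψ).entry l j g)).prod :=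
  apply_eq_list_prod_ofEnd_entry φ (ψ (Pi.mulSingle j g)) i

end EndMatrix

/-- `End(G₁ × ⋯ × Gₙ)` is isomorphic, as a monoid, to the monoid of matrices `(φᵢⱼ)` of
homomorphisms with row-wise commuting images, with matrix multiplication given by
composition and pointwise product: there is a bijection sending an endomorphism to its
matrix of components `πᵢ ∘ φ ∘ eⱼ`, under which the identity corresponds to the identity
matrix and composition corresponds to matrix multiplication. -/
theorem end_monoid_equiv_endMatrix (n : ℕ) (G : Fin n → Type*) [∀ i, Group (G i)] :
    ∃ e : Monoid.End (∀ i, G i) ≃ EndMatrix G,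
      (∀ (φ : Monoid.End (∀ i, G i)) (i j : Fin n) (g : G j),
        (e φ).entry i j g = φ (Pi.mulSingle j g) i) ∧
      (∀ (i j : Fin n) (g : G j),
        (e 1).entry i j g = if h : i = j then h ▸ g else 1) ∧
      (∀ (φ ψ : Monoid.End (∀ i, G i)) (i j : Fin n) (g : G j),
        (e (φ * ψ)).entry i j g =
          ((List.finRange n).map (fun l => (e φ).entry i l ((e ψ).entry l j g))).prod) :=
  ⟨EndMatrix.endEquiv, EndMatrix.ofEnd_entry, EndMatrix.ofEnd_one_entry,
    EndMatrix.ofEnd_mul_entry⟩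
end

section
/- Let N be a finitely generated torsion-free nilpotent group whose rational Malcev completion decomposes as N^ℚ = A × B with A and B nontrivial. Set N_A = A ∩ N and N_B = B ∩ N. Then N_A and N_B are nontrivial, ⟨N_A, N_B⟩ ≅ N_A × N_B, and ⟨N_A, N_B⟩ has finite index in N. -/
/-!
A finitely generated torsion nilpotent group `G` is finite: by induction on the nilpotency
class `G ⧸ Z(G)` is finite, so `Z(G)` has finite index, hence is a finitely generated torsion
abelian group, hence finite. So a normal subgroup of `N` containing a positive power of every
element has finite index. Every `(a, b) ∈ A × B` is the commuting product `(a, 1) * (1, b)`,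
and positive powers of both factors lie in `N`; hence a positive power of every element of
`N` lies in `N_A N_B`. As `N_A` and `N_B` commute and meet trivially, `N_A N_B` is their
direct product, and they are nontrivial because `A × B` is torsion-free.
-/

/-- `ι : N →* M` realizes `M` as the rational Malcev completion of `N`: `M` is a
torsion-free nilpotent group into which `N` embeds, every element of `M` has a unique
`k`-th root for every `k ≥ 1`, and every element of `M` has some positive power lying in
(the image of) `N`. -/
structure IsRationalMalcevCompletion {N M : Type*} [Group N] [Group M] (ι : N →* M) :
    Prop where
  nilpotent : Group.IsNilpotent M
  torsionFree : ∀ g : M, g ≠ 1 → ¬IsOfFinOrder g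
  injective : Function.Injective ι
  uniqueRoots : ∀ (m : M) (k : ℕ), 0 < k → ∃! x : M, x ^ k = m
  cofinal : ∀ m : M, ∃ k : ℕ, 0 < k ∧ m ^ k ∈ MonoidHom.range ι

open Subgroup

theorem Group.finite_of_fg_of_isMulTorsion_of_isNilpotent (G : Type*) [Group G]
    [Group.IsNilpotent G] [Group.FG G] (hG : IsMulTorsion G) : Finite G := by
  revert hG
  refine Group.nilpotent_center_quotient_ind
    (P := fun G _ _ => ∀ [Group.FG G], IsMulTorsion G → Finite G) G
    (fun G _ _ _ _ => Finite.of_subsingleton) (fun G _ _ ih _ hG => ?_)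
  have : Finite (G ⧸ center G) :=
    ih (hG.of_surjective (QuotientGroup.mk'_surjective (center G)))
  have : (center G).FiniteIndex := finiteIndex_of_finite_quotient
  have : Group.FG (center G) := fg_of_index_ne_zero _
  have : Finite (center G) :=
    open scoped IsMulCommutative in CommGroup.finite_of_fg_isMulTorsion _ (hG.subgroup _)
  exact Finite.of_subgroup_quotient (center G)

theorem Subgroup.finiteIndex_of_forall_exists_pow_mem {G : Type*} [Group G]
    [Group.IsNilpotent G] [Group.FG G] (H : Subgroup G) [H.Normal]
    (h : ∀ g : G, ∃ k : ℕ, 0 < k ∧ g ^ k ∈ H) : H.FiniteIndex := by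
  have hG : IsMulTorsion (G ⧸ H) := by
    intro x
    induction x using QuotientGroup.induction_on with | H g => ?_
    obtain ⟨k, hk, hgk⟩ := h g
    refine isOfFinOrder_iff_pow_eq_one.mpr ⟨k, hk, ?_⟩
    rwa [← QuotientGroup.mk_pow, QuotientGroup.eq_one_iff]
  have := Group.finite_of_fg_of_isMulTorsion_of_isNilpotent (G ⧸ H) hG
  exact finiteIndex_of_finite_quotient

noncomputable def Subgroup.supEquivProdOfCommute {G : Type*} [Group G] (H K : Subgroup G)
    (hcomm : ∀ x ∈ H, ∀ y ∈ K, Commute x y) (hdisj : Disjoint H K) :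
    ↥(H ⊔ K) ≃* H × K :=
  let φ := H.subtype.noncommCoprod K.subtype fun x y => hcomm x x.2 y y.2
  have hφ : Function.Injective φ :=
    (MonoidHom.noncommCoprod_injective _ _ _).mpr
      ⟨H.subtype_injective, K.subtype_injective, by simpa using hdisj⟩
  have hrange : φ.range = H ⊔ K :=
    (MonoidHom.noncommCoprod_range _ _ _).trans (by rw [range_subtype, range_subtype])
  ((MonoidHom.ofInjective hφ).trans (MulEquiv.subgroupCongr hrange)).symm

theorem Subgroup.comap_ne_bot_of_forall_exists_pow_mem_range {N M : Type*} [Group N]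
    [Group M] (ι : N →* M) (htf : ∀ g : M, g ≠ 1 → ¬IsOfFinOrder g)
    (hcof : ∀ m : M, ∃ k : ℕ, 0 < k ∧ m ^ k ∈ ι.range) {S : Subgroup M} (hS : S ≠ ⊥) :
    S.comap ι ≠ ⊥ := by
  obtain ⟨⟨m, hmS⟩, hm⟩ := ne_bot_iff_exists_ne_one.mp hS
  obtain ⟨k, hk, n, hn⟩ := hcof m
  refine ne_bot_iff_exists_ne_one.mpr ⟨⟨n, by simpa [hn] using pow_mem hmS k⟩, ?_⟩
  rintro ⟨⟩
  exact htf m (by simpa using hm) (isOfFinOrder_iff_pow_eq_one.mpr ⟨k, hk, by simp [← hn]⟩)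

section Prod

variable {N A B : Type*} [Group N] [Group A] [Group B] {ι : N →* A × B}

theorem disjoint_comap_ker_snd_comap_ker_fst (hι : Function.Injective ι) :
    Disjoint ((MonoidHom.snd A B).ker.comap ι) ((MonoidHom.fst A B).ker.comap ι) :=
  disjoint_def.mpr fun hxA hxB => hι (by rw [map_one]; exact Prod.ext hxB hxA)

theorem commute_of_mem_comap_ker_snd_of_mem_comap_ker_fst (hι : Function.Injective ι)
    {x y : N} (hx : x ∈ (MonoidHom.snd A B).ker.comap ι)
    (hy : y ∈ (MonoidHom.fst A B).ker.comap ι) : Commute x y := by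
  refine Commute.of_map hι (Prod.ext ?_ ?_)
  · simp [show (ι y).1 = 1 from hy]
  · simp [show (ι x).2 = 1 from hx]

theorem exists_pow_mem_comap_ker_snd_sup_comap_ker_fst (hι : Function.Injective ι)
    (hcof : ∀ m : A × B, ∃ k : ℕ, 0 < k ∧ m ^ k ∈ ι.range) (g : N) :
    ∃ k : ℕ, 0 < k ∧
      g ^ k ∈ (MonoidHom.snd A B).ker.comap ι ⊔ (MonoidHom.fst A B).ker.comap ι := by
  obtain ⟨k, hk, x, hx⟩ := hcof ((ι g).1, 1)
  obtain ⟨l, hl, y, hy⟩ := hcof (1, (ι g).2)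
  have hxA : x ∈ (MonoidHom.snd A B).ker.comap ι := by
    show (ι x).2 = 1
    simp [hx]
  have hyB : y ∈ (MonoidHom.fst A B).ker.comap ι := by
    show (ι y).1 = 1
    simp [hy]
  have hg : g ^ (k * l) = x ^ l * y ^ k := hι <| by
    rw [map_pow, map_mul, map_pow, map_pow, hx, hy]
    ext <;> simp [← pow_mul, mul_comm k l]
  exact ⟨k * l, Nat.mul_pos hk hl,
    hg ▸ mul_mem (mem_sup_left (pow_mem hxA l)) (mem_sup_right (pow_mem hyB k))⟩

end Prod

theorem decomposition_of_malcev_completion_general (N A B : Type*) [Group N] [Group A] [Group B]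
    [Nontrivial A] [Nontrivial B]
    (hfg : Group.FG N) [Group.IsNilpotent N]
    (ι : N →* A × B) (hι : IsRationalMalcevCompletion ι) :
    (Subgroup.comap ι (MonoidHom.ker (MonoidHom.snd A B)) ≠ ⊥) ∧
    (Subgroup.comap ι (MonoidHom.ker (MonoidHom.fst A B)) ≠ ⊥) ∧
    Nonempty
      ((↥(Subgroup.comap ι (MonoidHom.ker (MonoidHom.snd A B)) ⊔
          Subgroup.comap ι (MonoidHom.ker (MonoidHom.fst A B)))) ≃*
        (↥(Subgroup.comap ι (MonoidHom.ker (MonoidHom.snd A B))) ×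
          ↥(Subgroup.comap ι (MonoidHom.ker (MonoidHom.fst A B))))) ∧
    (Subgroup.comap ι (MonoidHom.ker (MonoidHom.snd A B)) ⊔
        Subgroup.comap ι (MonoidHom.ker (MonoidHom.fst A B))).FiniteIndex := by
  have hNA := comap_ne_bot_of_forall_exists_pow_mem_range ι hι.torsionFree hι.cofinal
    (by simp : (MonoidHom.snd A B).ker ≠ ⊥)
  have hNB := comap_ne_bot_of_forall_exists_pow_mem_range ι hι.torsionFree hι.cofinal
    (by simp : (MonoidHom.fst A B).ker ≠ ⊥)
  have e := supEquivProdOfCommute _ _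
    (fun _ hx _ hy => commute_of_mem_comap_ker_snd_of_mem_comap_ker_fst hι.injective hx hy)
    (disjoint_comap_ker_snd_comap_ker_fst hι.injective)
  have : Group.FG N := hfg
  have : ((MonoidHom.snd A B).ker.comap ι ⊔ (MonoidHom.fst A B).ker.comap ι).Normal :=
    sup_normal _ _
  exact ⟨hNA, hNB, ⟨e⟩, finiteIndex_of_forall_exists_pow_mem _
    (exists_pow_mem_comap_ker_snd_sup_comap_ker_fst hι.injective hι.cofinal)⟩

/-- If the rational Malcev completion of `N` decomposes as `A × B` with `A`, `B`
nontrivial, then `N_A = A ∩ N` and `N_B = B ∩ N` are nontrivial, their join is their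
internal direct product, and it has finite index in `N`. -/
theorem decomposition_of_malcev_completion (N A B : Type*) [Group N] [Group A] [Group B]
    [Nontrivial A] [Nontrivial B]
    (hfg : Group.FG N) (htf : ∀ g : N, g ≠ 1 → ¬IsOfFinOrder g) [Group.IsNilpotent N]
    (ι : N →* A × B) (hι : IsRationalMalcevCompletion ι) :
    (Subgroup.comap ι (MonoidHom.ker (MonoidHom.snd A B)) ≠ ⊥) ∧
    (Subgroup.comap ι (MonoidHom.ker (MonoidHom.fst A B)) ≠ ⊥) ∧
    Nonempty
      ((↥(Subgroup.comap ι (MonoidHom.ker (MonoidHom.snd A B)) ⊔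
          Subgroup.comap ι (MonoidHom.ker (MonoidHom.fst A B)))) ≃*
        (↥(Subgroup.comap ι (MonoidHom.ker (MonoidHom.snd A B))) ×
          ↥(Subgroup.comap ι (MonoidHom.ker (MonoidHom.fst A B))))) ∧
    (Subgroup.comap ι (MonoidHom.ker (MonoidHom.snd A B)) ⊔
        Subgroup.comap ι (MonoidHom.ker (MonoidHom.fst A B))).FiniteIndex :=
  decomposition_of_malcev_completion_general N A B hfg ι hι
end

section
/- A finitely generated torsion-free nilpotent group N is rationally indecomposable (its rational Malcev completion is directly indecomposable) if and only if every finite index subgroup of N is directly indecomposable. -/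
/-- A group is directly indecomposable if whenever it is isomorphic to a direct product
`H × K`, one of the factors is trivial. -/
def DirectlyIndecomposable (G : Type u) [Group G] : Prop :=
  ∀ (H K : Type u) (_ : Group H) (_ : Group K),
    Nonempty (G ≃* H × K) → Subsingleton H ∨ Subsingleton K

/-!
A direct decomposition `H = A × B` of a finite-index subgroup of `N` spreads to the decomposition
`M = I(A) × I(B)`, where `I(X)` is the isolator of `X` (the elements having a positive power in
`X`): uniqueness of roots in `M` makes the isolators commute and meet trivially, and since every
element of `M` has a power in `H`, the roots of the two components of that power multiply back
to the element. Conversely a decomposition `M = A × B` restricts to commuting subgroups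
`A ∩ N`, `B ∩ N` of `N` whose product has every element of `N` in its isolator; in a finitely
generated nilpotent group such a subgroup has finite index, and every nontrivial factor of `M`
meets `N` nontrivially.

The two facts about nilpotent groups, that isolators are subgroups and that a subgroup of a
finitely generated nilpotent group with full isolator has finite index, are proved by induction
on the nilpotency class: modulo the last term of the lower central series, resp. modulo the
center, the claim holds by induction, and what remains is central.
-/

open scoped commutatorElement

section Commutator

variable {G : Type*} [Group G]

theorem commutatorElement_pow_right_of_mem_center {u t : G} (h : ⁅u, t⁆ ∈ Subgroup.center G)
    (n : ℕ) : ⁅u, t ^ n⁆ = ⁅u, t⁆ ^ n := by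
  induction n with
  | zero => simp
  | succ n ih =>
    rw [pow_succ, commutatorElement_mul_right_eq_mul_conj, ih, mul_assoc (_ ^ n),
      Subgroup.mem_center_iff.mp h (t ^ n), ← mul_assoc, mul_inv_cancel_right, pow_succ]

theorem commutatorElement_mul_mem_center_right (a s : G) {z : G} (hz : z ∈ Subgroup.center G) :
    ⁅a, s * z⁆ = ⁅a, s⁆ := by
  rw [commutatorElement_mul_right_eq_mul_conj,
    commutatorElement_eq_one_iff_commute.mpr (Subgroup.mem_center_iff.mp hz a), mul_one,
    mul_inv_cancel_right]

theorem commutatorElement_mul_mem_center_left (s b : G) {z : G} (hz : z ∈ Subgroup.center G) :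
    ⁅s * z, b⁆ = ⁅s, b⁆ := by
  rw [← commutatorElement_inv, commutatorElement_mul_mem_center_right b s hz,
    commutatorElement_inv]

end Commutator

namespace Subgroup

variable {G H : Type*} [Group G] [Group H]

theorem mem_sup_of_commute {A B : Subgroup G} (hAB : ∀ a ∈ A, ∀ b ∈ B, Commute a b) {x : G}
    (hx : x ∈ A ⊔ B) : ∃ a ∈ A, ∃ b ∈ B, a * b = x := by
  rw [← range_subtype A, ← range_subtype B,
    ← MonoidHom.noncommCoprod_range A.subtype B.subtype fun a b => hAB a a.2 b b.2] at hx
  obtain ⟨⟨a, b⟩, rfl⟩ := hx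
  exact ⟨a, a.2, b, b.2, rfl⟩

noncomputable def prodMulEquivSup {A B : Subgroup G} (hAB : ∀ a ∈ A, ∀ b ∈ B, Commute a b)
    (hdisj : Disjoint A B) : A × B ≃* ↥(A ⊔ B) :=
  have hcomm : ∀ (a : A) (b : B), Commute (A.subtype a) (B.subtype b) :=
    fun a b => hAB a a.2 b b.2
  (MonoidHom.ofInjective ((MonoidHom.noncommCoprod_injective _ _ hcomm).mpr
      ⟨A.subtype_injective, B.subtype_injective, by rwa [range_subtype, range_subtype]⟩)).trans
    (MulEquiv.subgroupCongr (by rw [MonoidHom.noncommCoprod_range, range_subtype, range_subtype]))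

def isolator (S : Subgroup G) : Set G := {g | ∃ n : ℕ, 0 < n ∧ g ^ n ∈ S}

theorem mem_isolator {S : Subgroup G} {g : G} :
    g ∈ S.isolator ↔ ∃ n : ℕ, 0 < n ∧ g ^ n ∈ S :=
  Iff.rfl

theorem subset_isolator (S : Subgroup G) : (S : Set G) ⊆ S.isolator :=
  fun _ hg => ⟨1, one_pos, by rwa [pow_one]⟩

theorem isolator_mono {S T : Subgroup G} (h : S ≤ T) : S.isolator ⊆ T.isolator :=
  fun _ ⟨n, hn, hg⟩ => ⟨n, hn, h hg⟩

theorem inv_mem_isolator {S : Subgroup G} {g : G} (hg : g ∈ S.isolator) : g⁻¹ ∈ S.isolator :=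
  let ⟨n, hn, hgn⟩ := hg
  ⟨n, hn, by rw [inv_pow]; exact S.inv_mem hgn⟩

theorem commutatorElement_mem {S : Subgroup G} {a b : G} (ha : a ∈ S) (hb : b ∈ S) :
    ⁅a, b⁆ ∈ S := by
  rw [commutatorElement_def]
  exact S.mul_mem (S.mul_mem (S.mul_mem ha hb) (S.inv_mem ha)) (S.inv_mem hb)

theorem finiteIndex_comap_of_surjective {f : G →* H} (hf : Function.Surjective f) (S : Subgroup H)
    [S.FiniteIndex] : (S.comap f).FiniteIndex :=
  ⟨by rw [index_comap_of_surjective S hf]; exact FiniteIndex.index_ne_zero⟩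

theorem mem_isolator_comap {f : G →* H} {S : Subgroup H} {g : G} :
    g ∈ (S.comap f).isolator ↔ f g ∈ S.isolator := by
  simp only [mem_isolator, mem_comap, map_pow]

theorem isolator_eq_univ_of_finiteIndex (S : Subgroup G) [S.FiniteIndex] : S.isolator = Set.univ :=
  Set.eq_univ_of_forall fun g =>
    ⟨S.normalCore.index, Nat.pos_of_ne_zero S.finiteIndex_normalCore.index_ne_zero,
      S.normalCore_le (S.normalCore.pow_index_mem g)⟩

theorem isolator_map_eq_univ {f : G →* H} (hf : f.range.isolator = Set.univ) {S : Subgroup G}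
    (hS : S.isolator = Set.univ) : (S.map f).isolator = Set.univ := by
  refine Set.eq_univ_of_forall fun h => ?_
  obtain ⟨k, hk, g, hg⟩ := hf ▸ Set.mem_univ h
  obtain ⟨n, hn, hgn⟩ := hS ▸ Set.mem_univ g
  refine ⟨k * n, Nat.mul_pos hk hn, ?_⟩
  rw [pow_mul, ← hg, ← map_pow]
  exact mem_map_of_mem f hgn

theorem isolator_sup_ker_eq_univ {f : G →* H} {S : Subgroup G}
    (hS : (S.map f).isolator = Set.univ) : (S ⊔ f.ker).isolator = Set.univ := by
  rw [← comap_map_eq]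
  exact Set.eq_univ_of_forall fun g => mem_isolator_comap.mpr (hS ▸ Set.mem_univ (f g))

theorem closure_subset_isolator {S : Subgroup G} {Y : Set G} (hY : Y ⊆ S.isolator)
    (hcomm : ∀ a ∈ closure Y, ∀ b ∈ closure Y, Commute a b) :
    (closure Y : Set G) ⊆ S.isolator := by
  intro g hg
  induction hg using closure_induction with
  | mem x hx => exact hY hx
  | one => exact S.subset_isolator S.one_mem
  | mul x y hx hy ihx ihy =>
    obtain ⟨m, hm, hxm⟩ := ihx
    obtain ⟨n, hn, hyn⟩ := ihy
    refine ⟨m * n, Nat.mul_pos hm hn, ?_⟩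
    rw [(hcomm x hx y hy).mul_pow, pow_mul, mul_comm m n, pow_mul]
    exact S.mul_mem (S.pow_mem hxm n) (S.pow_mem hyn m)
  | inv x hx ih => exact inv_mem_isolator ih

theorem isolator_sup_subset_of_le_center {S L : Subgroup G} (hL : L ≤ center G)
    (hLS : (L : Set G) ⊆ S.isolator) : (S ⊔ L).isolator ⊆ S.isolator := by
  rintro g ⟨m, hm, hgm⟩
  obtain ⟨s, hs, z, hz, hsz⟩ :=
    mem_sup_of_commute (fun s _ z hz => mem_center_iff.mp (hL hz) s) hgm
  obtain ⟨n, hn, hzn⟩ := hLS hz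
  have hcomm : Commute s z := mem_center_iff.mp (hL hz) s
  refine ⟨m * n, Nat.mul_pos hm hn, ?_⟩
  rw [pow_mul, ← hsz, hcomm.mul_pow]
  exact S.mul_mem (S.pow_mem hs n) hzn

/-- `⁅u, ·⁆` is a homomorphism into the center, so `⁅u, t⁆ ^ (m * n) = ⁅s, s'⁆⁻¹`
when `t ^ m = s * z` and `u ^ n = s' * z'` with `s, s' ∈ S` and `z, z'` central. -/
theorem commutatorElement_mem_isolator {S : Subgroup G} {u : G}
    (hu : ∀ g, ⁅u, g⁆ ∈ center G) (hS : ∀ g, g ∈ (S ⊔ center G).isolator) (t : G) :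
    ⁅u, t⁆ ∈ S.isolator := by
  obtain ⟨m, hm, htm⟩ := hS t
  obtain ⟨s, hs, z, hz, hsz⟩ := mem_sup_of_normal_right.mp htm
  obtain ⟨n, hn, hun⟩ := hS u
  obtain ⟨s', hs', z', hz', hsz'⟩ := mem_sup_of_normal_right.mp hun
  have hsu : ⁅s, u⁆ ∈ center G := by rw [← commutatorElement_inv]; exact inv_mem (hu s)
  refine ⟨m * n, Nat.mul_pos hm hn, ?_⟩
  rw [pow_mul, ← commutatorElement_pow_right_of_mem_center (hu t), ← hsz,
    commutatorElement_mul_mem_center_right u s hz, ← commutatorElement_inv, inv_pow,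
    ← commutatorElement_pow_right_of_mem_center hsu, ← hsz',
    commutatorElement_mul_mem_center_right s s' hz', commutatorElement_inv]
  exact commutatorElement_mem hs' hs


theorem lowerCentralSeries_le_center_of_nilpotencyClass_le [Group.IsNilpotent G] {c : ℕ}
    (hc : Group.nilpotencyClass G ≤ c + 1) :
    (⊤ : Subgroup G).lowerCentralSeries c ≤ center G := by
  intro z hz
  have hzg : ∀ g, ⁅z, g⁆ ∈ (⊤ : Subgroup G).lowerCentralSeries (c + 1) :=
    fun g => commutator_mem_commutator hz (mem_top g)
  simp only [lowerCentralSeries_eq_bot_iff_nilpotencyClass_le.mpr hc, mem_bot,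
    commutatorElement_eq_one_iff_commute] at hzg
  exact mem_center_iff.mpr fun g => (hzg g).eq.symm

theorem nilpotencyClass_quotient_lowerCentralSeries_le [Group.IsNilpotent G] (c : ℕ) :
    Group.nilpotencyClass (G ⧸ (⊤ : Subgroup G).lowerCentralSeries c) ≤ c := by
  rw [← lowerCentralSeries_eq_bot_iff_nilpotencyClass_le,
    ← map_top_of_surjective _ (QuotientGroup.mk'_surjective _), ← map_lowerCentralSeries,
    QuotientGroup.map_mk'_self]

theorem lowerCentralSeries_subset_isolator {S : Subgroup G} {X : Set G} (hX : closure X = ⊤)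
    (hXS : X ⊆ S.isolator) {c : ℕ} (hc : (⊤ : Subgroup G).lowerCentralSeries c ≤ center G)
    (hS : ∀ g, g ∈ (S ⊔ center G).isolator) :
    ((⊤ : Subgroup G).lowerCentralSeries c : Set G) ⊆ S.isolator := by
  have hcomm : ∀ a ∈ (⊤ : Subgroup G).lowerCentralSeries c,
      ∀ b ∈ (⊤ : Subgroup G).lowerCentralSeries c, Commute a b :=
    fun a _ b hb => mem_center_iff.mp (hc hb) a
  cases c with
  | zero =>
    rw [lowerCentralSeries_zero, ← hX] at hcomm ⊢
    exact closure_subset_isolator hXS hcomm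
  | succ c =>
    rw [lowerCentralSeries_succ, commutator_def] at hcomm ⊢
    refine closure_subset_isolator ?_ hcomm
    rintro _ ⟨u, hu, t, -, rfl⟩
    exact commutatorElement_mem_isolator
      (fun g => hc (commutator_mem_commutator hu (mem_top g))) hS t

theorem isolator_eq_univ_of_closure_eq_top [Group.IsNilpotent G] (S : Subgroup G) {X : Set G}
    (hX : closure X = ⊤) (hXS : X ⊆ S.isolator) : S.isolator = Set.univ := by
  obtain ⟨c, hc⟩ : ∃ c, Group.nilpotencyClass G ≤ c := ⟨_, le_rfl⟩
  induction c generalizing G with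
  | zero =>
    have := Group.nilpotencyClass_zero_iff_subsingleton.mp (Nat.le_zero.mp hc)
    exact Set.eq_univ_of_forall fun g => Subsingleton.elim 1 g ▸ S.subset_isolator S.one_mem
  | succ c ih =>
    set L := (⊤ : Subgroup G).lowerCentralSeries c
    set f := QuotientGroup.mk' L
    have hL : L ≤ center G := lowerCentralSeries_le_center_of_nilpotencyClass_le hc
    have hSL : (S ⊔ L).isolator = Set.univ := by
      rw [← QuotientGroup.ker_mk' L]
      refine isolator_sup_ker_eq_univ (ih (S.map f) (X := f '' X) ?_ ?_
        (nilpotencyClass_quotient_lowerCentralSeries_le c))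
      · rw [← MonoidHom.map_closure, hX,
          map_top_of_surjective _ (QuotientGroup.mk'_surjective L)]
      · rintro _ ⟨x, hx, rfl⟩
        exact mem_isolator_comap.mp (isolator_mono (le_comap_map f S) (hXS hx))
    have hLS : (L : Set G) ⊆ S.isolator := lowerCentralSeries_subset_isolator hX hXS hL
      fun g => isolator_mono (sup_le_sup_left hL S) (hSL ▸ Set.mem_univ g)
    exact Set.eq_univ_of_subset (isolator_sup_subset_of_le_center hL hLS) hSL

theorem mul_mem_isolator [Group.IsNilpotent G] {S : Subgroup G} {x y : G} (hx : x ∈ S.isolator)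
    (hy : y ∈ S.isolator) : x * y ∈ S.isolator := by
  set K := closure {x, y}
  have hK : (S.comap K.subtype).isolator = Set.univ := by
    refine isolator_eq_univ_of_closure_eq_top _ (closure_preimage_eq_top {x, y}) ?_
    rintro ⟨g, _⟩ (rfl | rfl : g = x ∨ g = y) <;> exact mem_isolator_comap.mpr ‹_›
  have hxy : x * y ∈ K := mul_mem (subset_closure (by simp)) (subset_closure (by simp))
  exact mem_isolator_comap.mp (hK ▸ Set.mem_univ (⟨x * y, hxy⟩ : K))

def isolatorSubgroup [Group.IsNilpotent G] (S : Subgroup G) : Subgroup G where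
  carrier := S.isolator
  one_mem' := S.subset_isolator S.one_mem
  mul_mem' := mul_mem_isolator
  inv_mem' := inv_mem_isolator

theorem finiteIndex_of_isolator_eq_univ_of_comm {A : Type*} [CommGroup A] [Group.FG A]
    {S : Subgroup A} (hS : S.isolator = Set.univ) : S.FiniteIndex := by
  refine finiteIndex_iff_finite_quotient.mpr (CommGroup.finite_of_fg_isMulTorsion _ fun q => ?_)
  obtain ⟨a, rfl⟩ := QuotientGroup.mk_surjective q
  obtain ⟨n, hn, han⟩ := hS ▸ Set.mem_univ a
  exact isOfFinOrder_iff_pow_eq_one.mpr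
    ⟨n, hn, by rw [← QuotientGroup.mk_pow, QuotientGroup.eq_one_iff]; exact han⟩

theorem finiteIndex_of_commutator_le [Group.FG G] {S : Subgroup G} (hS : _root_.commutator G ≤ S)
    (h : S.isolator = Set.univ) : S.FiniteIndex := by
  have hof : Function.Surjective (Abelianization.of : G →* Abelianization G) :=
    QuotientGroup.mk_surjective
  have : Group.FG (Abelianization G) := Group.fg_of_surjective hof
  have := finiteIndex_of_isolator_eq_univ_of_comm (isolator_map_eq_univ
    (by rw [MonoidHom.range_eq_top.mpr hof]; exact isolator_eq_univ_of_finiteIndex ⊤) h)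
  rw [← sup_eq_left.mpr (Abelianization.ker_of G ▸ hS : Abelianization.of.ker ≤ S),
    ← comap_map_eq]
  exact finiteIndex_comap_of_surjective hof _

theorem commutator_le_subgroupOf_sup_center (S : Subgroup G) :
    _root_.commutator ↥(S ⊔ center G) ≤ S.subgroupOf (S ⊔ center G) := by
  refine commutator_le.mpr ?_
  rintro ⟨x, hx⟩ - ⟨y, hy⟩ -
  obtain ⟨s, hs, z, hz, rfl⟩ := mem_sup_of_normal_right.mp hx
  obtain ⟨s', hs', z', hz', rfl⟩ := mem_sup_of_normal_right.mp hy
  rw [mem_subgroupOf]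
  show ⁅s * z, s' * z'⁆ ∈ S
  rw [commutatorElement_mul_mem_center_right _ _ hz', commutatorElement_mul_mem_center_left _ _ hz]
  exact commutatorElement_mem hs hs'

theorem finiteIndex_of_isolator_eq_univ [Group.IsNilpotent G] [Group.FG G] (S : Subgroup G)
    (hS : S.isolator = Set.univ) : S.FiniteIndex := by
  refine Group.nilpotent_center_quotient_ind (P := fun G _ _ => ∀ [Group.FG G] (S : Subgroup G),
    S.isolator = Set.univ → S.FiniteIndex) G (fun _ _ _ _ _ _ => inferInstance) ?_ S hS
  intro G _ _ ih _ S hS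
  set f := QuotientGroup.mk' (center G)
  have hT : (S ⊔ center G).FiniteIndex := by
    have := ih (S.map f) (isolator_map_eq_univ (by
      rw [MonoidHom.range_eq_top.mpr (QuotientGroup.mk'_surjective _)]
      exact isolator_eq_univ_of_finiteIndex ⊤) hS)
    rw [← QuotientGroup.ker_mk' (center G), ← comap_map_eq]
    exact finiteIndex_comap_of_surjective (QuotientGroup.mk'_surjective _) _
  have hST : (S.subgroupOf (S ⊔ center G)).FiniteIndex :=
    finiteIndex_of_commutator_le (commutator_le_subgroupOf_sup_center S)
      (Set.eq_univ_of_forall fun t => mem_isolator_comap.mpr (hS ▸ Set.mem_univ _))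
  rw [finiteIndex_iff, ← relIndex_mul_index (le_sup_left : S ≤ S ⊔ center G)]
  exact mul_ne_zero hST.index_ne_zero hT.index_ne_zero

end Subgroup

theorem directlyIndecomposable_iff {G : Type*} [Group G] :
    DirectlyIndecomposable G ↔ ∀ A B : Subgroup G, (∀ a ∈ A, ∀ b ∈ B, Commute a b) →
      Disjoint A B → A ⊔ B = ⊤ → A = ⊥ ∨ B = ⊥ := by
  constructor
  · intro hG A B hAB hdisj hsup
    have e : G ≃* A × B := ((Subgroup.prodMulEquivSup hAB hdisj).trans
      ((MulEquiv.subgroupCongr hsup).trans Subgroup.topEquiv)).symm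
    exact (hG A B _ _ ⟨e⟩).imp (@Subgroup.eq_bot_of_subsingleton _ _ A)
      (@Subgroup.eq_bot_of_subsingleton _ _ B)
  · rintro h H K _ _ ⟨e⟩
    set A := ((MonoidHom.snd H K).comp e.toMonoidHom).ker
    set B := ((MonoidHom.fst H K).comp e.toMonoidHom).ker
    have hA : ∀ g, g ∈ A ↔ (e g).2 = 1 := fun g => Iff.rfl
    have hB : ∀ g, g ∈ B ↔ (e g).1 = 1 := fun g => Iff.rfl
    have hAB : ∀ a ∈ A, ∀ b ∈ B, Commute a b := fun a ha b hb =>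
      Commute.of_map e.injective <| Prod.ext (by simp [(hB b).mp hb]) (by simp [(hA a).mp ha])
    have hdisj : Disjoint A B := Subgroup.disjoint_def.mpr fun {g} hgA hgB =>
      e.map_eq_one_iff.mp (Prod.ext ((hB g).mp hgB) ((hA g).mp hgA))
    have hsup : A ⊔ B = ⊤ := (Subgroup.eq_top_iff' _).mpr fun g => by
      have hg : e.symm ((e g).1, 1) * e.symm (1, (e g).2) = g := by rw [← map_mul]; simp
      exact hg ▸ Subgroup.mul_mem_sup ((hA _).mpr (by simp)) ((hB _).mpr (by simp))
    refine (h A B hAB hdisj hsup).imp (fun hA₀ => subsingleton_of_forall_eq 1 fun x => ?_)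
      (fun hB₀ => subsingleton_of_forall_eq 1 fun y => ?_)
    · have : e.symm (x, 1) = 1 := Subgroup.mem_bot.mp (hA₀ ▸ (hA _).mpr (by simp))
      simpa using congrArg (fun g => (e g).1) this
    · have : e.symm (1, y) = 1 := Subgroup.mem_bot.mp (hB₀ ▸ (hB _).mpr (by simp))
      simpa using congrArg (fun g => (e g).2) this

theorem eq_bot_or_eq_bot_of_directlyIndecomposable_sup {G : Type*} [Group G] {A B : Subgroup G}
    (hAB : ∀ a ∈ A, ∀ b ∈ B, Commute a b) (hdisj : Disjoint A B)
    (h : DirectlyIndecomposable ↥(A ⊔ B)) : A = ⊥ ∨ B = ⊥ :=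
  (h A B _ _ ⟨(Subgroup.prodMulEquivSup hAB hdisj).symm⟩).imp
    (@Subgroup.eq_bot_of_subsingleton _ _ A) (@Subgroup.eq_bot_of_subsingleton _ _ B)

def HasUniqueRoots (M : Type*) [Group M] : Prop :=
  ∀ (m : M) (k : ℕ), 0 < k → ∃! x : M, x ^ k = m

namespace HasUniqueRoots

variable {M : Type*} [Group M]

theorem eq_of_pow_eq_pow (hM : HasUniqueRoots M) {x y : M} {k : ℕ} (hk : 0 < k)
    (h : x ^ k = y ^ k) : x = y :=
  (hM _ k hk).unique h rfl

theorem eq_one_of_pow_eq_one (hM : HasUniqueRoots M) {x : M} {k : ℕ} (hk : 0 < k)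
    (h : x ^ k = 1) : x = 1 :=
  hM.eq_of_pow_eq_pow hk (h.trans (one_pow k).symm)

theorem commute_of_commute_pow_left (hM : HasUniqueRoots M) {x y : M} {k : ℕ} (hk : 0 < k)
    (h : Commute (x ^ k) y) : Commute x y := by
  have hconj : (y * x * y⁻¹) ^ k = x ^ k := by rw [conj_pow, ← h.eq, mul_inv_cancel_right]
  exact (mul_inv_eq_iff_eq_mul.mp (hM.eq_of_pow_eq_pow hk hconj)).symm

theorem commute_of_mem_isolator (hM : HasUniqueRoots M) {A B : Subgroup M}
    (hAB : ∀ a ∈ A, ∀ b ∈ B, Commute a b) {x y : M} (hx : x ∈ A.isolator)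
    (hy : y ∈ B.isolator) : Commute x y := by
  obtain ⟨k, hk, hxk⟩ := hx
  obtain ⟨l, hl, hyl⟩ := hy
  exact hM.commute_of_commute_pow_left hk
    (hM.commute_of_commute_pow_left hl (hAB _ hxk _ hyl).symm).symm

variable [Group.IsNilpotent M]

theorem disjoint_isolatorSubgroup (hM : HasUniqueRoots M) {A B : Subgroup M}
    (hdisj : Disjoint A B) : Disjoint A.isolatorSubgroup B.isolatorSubgroup := by
  refine Subgroup.disjoint_def.mpr fun {x} ⟨k, hk, hxk⟩ ⟨l, hl, hxl⟩ => ?_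
  refine hM.eq_one_of_pow_eq_one (Nat.mul_pos hk hl) (Subgroup.disjoint_def.mp hdisj ?_ ?_)
  · rw [pow_mul]; exact A.pow_mem hxk l
  · rw [mul_comm, pow_mul]; exact B.pow_mem hxl k

theorem isolatorSubgroup_sup_eq_top (hM : HasUniqueRoots M) {A B : Subgroup M}
    (hAB : ∀ a ∈ A, ∀ b ∈ B, Commute a b) (hcof : (A ⊔ B).isolator = Set.univ) :
    A.isolatorSubgroup ⊔ B.isolatorSubgroup = ⊤ := by
  refine (Subgroup.eq_top_iff' _).mpr fun m => ?_
  obtain ⟨k, hk, hmk⟩ := hcof ▸ Set.mem_univ m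
  obtain ⟨a, ha, b, hb, hab⟩ := Subgroup.mem_sup_of_commute hAB hmk
  obtain ⟨x, hx, -⟩ := hM a k hk
  obtain ⟨y, hy, -⟩ := hM b k hk
  have hxA : x ∈ A.isolator := ⟨k, hk, hx ▸ ha⟩
  have hyB : y ∈ B.isolator := ⟨k, hk, hy ▸ hb⟩
  have hxy : x * y = m := hM.eq_of_pow_eq_pow hk <| by
    rw [(hM.commute_of_mem_isolator hAB hxA hyB).mul_pow, hx, hy, hab]
  exact hxy ▸ Subgroup.mul_mem_sup hxA hyB

end HasUniqueRoots

namespace IsRationalMalcevCompletion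

variable {N M : Type*} [Group N] [Group M] {ι : N →* M}

theorem isolator_map_eq_univ (hι : IsRationalMalcevCompletion ι) (H : Subgroup N)
    [H.FiniteIndex] : (H.map ι).isolator = Set.univ :=
  Subgroup.isolator_map_eq_univ (Set.eq_univ_of_forall hι.cofinal)
    (H.isolator_eq_univ_of_finiteIndex)

theorem isolator_comap_sup_eq_univ (hι : IsRationalMalcevCompletion ι) {A B : Subgroup M}
    (hAB : ∀ a ∈ A, ∀ b ∈ B, Commute a b) (hsup : A ⊔ B = ⊤) :
    (A.comap ι ⊔ B.comap ι).isolator = Set.univ := by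
  refine Set.eq_univ_of_forall fun n => ?_
  obtain ⟨a, ha, b, hb, hab⟩ :=
    Subgroup.mem_sup_of_commute hAB (hsup ▸ Subgroup.mem_top (ι n))
  obtain ⟨k, hk, a', ha'⟩ := hι.cofinal a
  obtain ⟨l, hl, b', hb'⟩ := hι.cofinal b
  have ha'A : a' ∈ A.comap ι := by rw [Subgroup.mem_comap, ha']; exact A.pow_mem ha k
  have hb'B : b' ∈ B.comap ι := by rw [Subgroup.mem_comap, hb']; exact B.pow_mem hb l
  refine ⟨k * l, Nat.mul_pos hk hl, ?_⟩
  have hpow : n ^ (k * l) = a' ^ l * b' ^ k := hι.injective <| by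
    rw [map_pow, ← hab, (hAB a ha b hb).mul_pow, map_mul, map_pow, map_pow, ha', hb', ← pow_mul,
      ← pow_mul, mul_comm l k]
  exact hpow ▸ Subgroup.mul_mem_sup (pow_mem ha'A l) (pow_mem hb'B k)

theorem eq_bot_of_comap_eq_bot (hι : IsRationalMalcevCompletion ι) {A : Subgroup M}
    (h : A.comap ι = ⊥) : A = ⊥ := by
  refine (Subgroup.eq_bot_iff_forall A).mpr fun a ha => ?_
  obtain ⟨k, hk, n, hn⟩ := hι.cofinal a
  have hnA : n ∈ A.comap ι := by rw [Subgroup.mem_comap, hn]; exact A.pow_mem ha k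
  refine HasUniqueRoots.eq_one_of_pow_eq_one hι.uniqueRoots hk ?_
  rw [← hn, Subgroup.mem_bot.mp (h ▸ hnA : n ∈ (⊥ : Subgroup N)), map_one]

theorem directlyIndecomposable_of_finiteIndex (hι : IsRationalMalcevCompletion ι)
    (hM : DirectlyIndecomposable M) (H : Subgroup N) [H.FiniteIndex] :
    DirectlyIndecomposable H := by
  have := hι.nilpotent
  rw [directlyIndecomposable_iff] at hM ⊢
  intro A B hAB hdisj hsup
  set φ := ι.comp H.subtype
  have hφ : Function.Injective φ := hι.injective.comp H.subtype_injective
  have hφAB : ∀ a ∈ A.map φ, ∀ b ∈ B.map φ, Commute a b := by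
    rintro _ ⟨a, ha, rfl⟩ _ ⟨b, hb, rfl⟩
    exact (hAB a ha b hb).map φ
  have hcof : (A.map φ ⊔ B.map φ).isolator = Set.univ := by
    rw [← Subgroup.map_sup, hsup, ← MonoidHom.range_eq_map, MonoidHom.range_comp,
      Subgroup.range_subtype]
    exact hι.isolator_map_eq_univ H
  have hroots : HasUniqueRoots M := hι.uniqueRoots
  refine (hM _ _ (fun x hx y hy => hroots.commute_of_mem_isolator hφAB hx hy)
    (hroots.disjoint_isolatorSubgroup (Subgroup.disjoint_map hφ hdisj))
    (hroots.isolatorSubgroup_sup_eq_top hφAB hcof)).imp ?_ ?_ <;>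
  · intro h
    rw [← Subgroup.map_eq_bot_iff_of_injective _ hφ, eq_bot_iff, ← h]
    exact Subgroup.subset_isolator _

theorem directlyIndecomposable_of_forall_finiteIndex [Group.FG N] [Group.IsNilpotent N]
    (hι : IsRationalMalcevCompletion ι)
    (hN : ∀ H : Subgroup N, H.FiniteIndex → DirectlyIndecomposable H) :
    DirectlyIndecomposable M := by
  rw [directlyIndecomposable_iff]
  intro A B hAB hdisj hsup
  have hAB' : ∀ a ∈ A.comap ι, ∀ b ∈ B.comap ι, Commute a b :=
    fun a ha b hb => (hAB _ ha _ hb).of_map hι.injective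
  have hdisj' : Disjoint (A.comap ι) (B.comap ι) := Subgroup.disjoint_def.mpr fun hxA hxB =>
    hι.injective ((Subgroup.disjoint_def.mp hdisj hxA hxB).trans (map_one ι).symm)
  have := Subgroup.finiteIndex_of_isolator_eq_univ _ (hι.isolator_comap_sup_eq_univ hAB hsup)
  exact (eq_bot_or_eq_bot_of_directlyIndecomposable_sup hAB' hdisj' (hN _ this)).imp
    hι.eq_bot_of_comap_eq_bot hι.eq_bot_of_comap_eq_bot

end IsRationalMalcevCompletion

theorem rationally_indecomposable_iff_finiteIndex_subgroups_indecomposable_general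
    (N : Type u) (M : Type v) [Group N] [Group M]
    (hfg : Group.FG N) [Group.IsNilpotent N]
    (ι : N →* M) (hι : IsRationalMalcevCompletion ι) :
    DirectlyIndecomposable M ↔
      ∀ H : Subgroup N, H.FiniteIndex → DirectlyIndecomposable H :=
  ⟨fun hM H _ => hι.directlyIndecomposable_of_finiteIndex hM H,
    hι.directlyIndecomposable_of_forall_finiteIndex⟩

/-- A finitely generated torsion-free nilpotent group `N` is rationally indecomposable
(its rational Malcev completion is directly indecomposable) if and only if every finite
index subgroup of `N` is directly indecomposable. -/
theorem rationally_indecomposable_iff_finiteIndex_subgroups_indecomposable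
    (N : Type u) (M : Type v) [Group N] [Group M]
    (hfg : Group.FG N) (htf : ∀ g : N, g ≠ 1 → ¬IsOfFinOrder g) [Group.IsNilpotent N]
    (ι : N →* M) (hι : IsRationalMalcevCompletion ι) :
    DirectlyIndecomposable M ↔
      ∀ H : Subgroup N, H.FiniteIndex → DirectlyIndecomposable H :=
  rationally_indecomposable_iff_finiteIndex_subgroups_indecomposable_general N M hfg ι hι
end

section
/- Let N be a finitely generated torsion-free nilpotent group and K ⊴ N a normal subgroup with N/K torsion-free. Then the rational Malcev completion of N/K is isomorphic to N^ℚ / K^ℚ, where K^ℚ denotes the rational completion of K viewed as a (normal) subgroup of N^ℚ. -/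
/-!
Everything rests on Mal'cev's theorem that roots are unique in a torsion-free nilpotent group.
It is proved by induction on the nilpotency class through `G ⧸ center G`, which stays
torsion-free because the centre is isolated: if `x ^ n` is central, the iterated commutators
`c 0 = g`, `c (k + 1) = ⁅c k, x⁆` vanish for large `k`, and `c (k + 2) = 1` means that `x`
commutes with `c (k + 1)`, whence `c (k + 1) ^ n = ⁅c k, x ^ n⁆ = 1`.

With `M = N^ℚ` and `KQ = K^ℚ`: roots exist in `KQ` and are unique in `M`, so `KQ` is closed
under taking roots and `M ⧸ KQ` is torsion-free nilpotent, hence has unique roots; existence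
of roots and cofinality descend from `M`. For injectivity of `N ⧸ K → M ⧸ KQ`: if `ι n ∈ KQ`,
some positive power of `n` lies in `K`, and `N ⧸ K` is torsion-free.
-/

open scoped commutatorElement

section TorsionFree

variable {G : Type*} [Group G]

theorem eq_one_of_pow_eq_one_of_torsionFree (htf : ∀ g : G, g ≠ 1 → ¬IsOfFinOrder g)
    {x : G} {n : ℕ} (hn : 0 < n) (h : x ^ n = 1) : x = 1 :=
  of_not_not fun hx => htf x hx (isOfFinOrder_iff_pow_eq_one.mpr ⟨n, hn, h⟩)

theorem torsionFree_quotient_of_mem_of_pow_mem {H : Subgroup G} [H.Normal]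
    (hH : ∀ (x : G) (n : ℕ), 0 < n → x ^ n ∈ H → x ∈ H) :
    ∀ q : G ⧸ H, q ≠ 1 → ¬IsOfFinOrder q := by
  intro q hq hfin
  obtain ⟨n, hn, hqn⟩ := isOfFinOrder_iff_pow_eq_one.mp hfin
  obtain ⟨x, rfl⟩ := QuotientGroup.mk_surjective q
  rw [← QuotientGroup.mk_pow, QuotientGroup.eq_one_iff] at hqn
  exact hq ((QuotientGroup.eq_one_iff x).mpr (hH x n hn hqn))

theorem commutatorElement_pow_right_of_commute {g x : G} (h : Commute x ⁅g, x⁆) (n : ℕ) :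
    ⁅g, x ^ n⁆ = ⁅g, x⁆ ^ n := by
  induction n with
  | zero => simp
  | succ n ih =>
    calc ⁅g, x ^ (n + 1)⁆ = ⁅g, x⁆ * (x * ⁅g, x ^ n⁆ * x⁻¹) := by
          simp only [commutatorElement_def]; group
      _ = ⁅g, x⁆ ^ (n + 1) := by
          rw [ih, (h.pow_right n).eq, mul_inv_cancel_right, pow_succ']

theorem commutatorElement_eq_one_of_pow_mem_center (htf : ∀ g : G, g ≠ 1 → ¬IsOfFinOrder g)
    {g x : G} {n : ℕ} (hn : 0 < n) (hx : x ^ n ∈ Subgroup.center G) (h : Commute x ⁅g, x⁆) :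
    ⁅g, x⁆ = 1 := by
  refine eq_one_of_pow_eq_one_of_torsionFree htf hn ?_
  rw [← commutatorElement_pow_right_of_commute h, commutatorElement_eq_one_iff_commute]
  exact Subgroup.mem_center_iff.mp hx g

theorem mem_center_of_pow_mem_center [Group.IsNilpotent G]
    (htf : ∀ g : G, g ≠ 1 → ¬IsOfFinOrder g) {x : G} {n : ℕ} (hn : 0 < n)
    (hx : x ^ n ∈ Subgroup.center G) : x ∈ Subgroup.center G := by
  refine Subgroup.mem_center_iff.mpr fun g => ?_
  let c : ℕ → G := fun k => (fun y => ⁅y, x⁆)^[k] g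
  have hc_succ (k : ℕ) : c (k + 1) = ⁅c k, x⁆ := Function.iterate_succ_apply' _ _ _
  have hc_mem (k : ℕ) : c k ∈ (⊤ : Subgroup G).lowerCentralSeries k := by
    induction k with
    | zero => exact Subgroup.mem_top g
    | succ k ih => rw [hc_succ]; exact Subgroup.commutator_mem_commutator ih (Subgroup.mem_top x)
  have hc_vanish : c (Group.nilpotencyClass G + 1) = 1 := by
    have h := hc_mem (Group.nilpotencyClass G)
    rw [Subgroup.lowerCentralSeries_nilpotencyClass, Subgroup.mem_bot] at h
    rw [hc_succ, h, commutatorElement_one_left]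
  have hc_desc (k : ℕ) (h : c (k + 2) = 1) : c (k + 1) = 1 := by
    rw [hc_succ] at h ⊢
    refine commutatorElement_eq_one_of_pow_mem_center htf hn hx ?_
    rw [← hc_succ]
    exact (commutatorElement_eq_one_iff_commute.mp h).symm
  have hc_one (k : ℕ) : c (k + 1) = 1 → c 1 = 1 := by
    induction k with
    | zero => exact id
    | succ k ih => exact fun h => ih (hc_desc k h)
  have h := hc_one _ hc_vanish
  rw [hc_succ] at h
  exact commutatorElement_eq_one_iff_commute.mp h

theorem torsionFree_quotient_center [Group.IsNilpotent G]
    (htf : ∀ g : G, g ≠ 1 → ¬IsOfFinOrder g) :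
    ∀ q : G ⧸ Subgroup.center G, q ≠ 1 → ¬IsOfFinOrder q :=
  torsionFree_quotient_of_mem_of_pow_mem fun _ _ hn => mem_center_of_pow_mem_center htf hn

theorem isMulTorsionFree_of_isNilpotent [Group.IsNilpotent G]
    (htf : ∀ g : G, g ≠ 1 → ¬IsOfFinOrder g) : IsMulTorsionFree G := by
  refine Group.nilpotent_center_quotient_ind
    (P := fun G _ _ => (∀ g : G, g ≠ 1 → ¬IsOfFinOrder g) → IsMulTorsionFree G) G
    (fun _ _ _ _ => inferInstance) (fun G _ _ ih htf => ⟨fun n hn x y hxy => ?_⟩) htf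
  replace hxy : x ^ n = y ^ n := hxy
  have := ih (torsionFree_quotient_center htf)
  have hxy_center : (x : G ⧸ Subgroup.center G) = y := by
    refine IsMulTorsionFree.pow_left_injective hn ?_
    simp only [← QuotientGroup.mk_pow, hxy]
  obtain ⟨z, hz, rfl⟩ : ∃ z ∈ Subgroup.center G, y = x * z :=
    ⟨x⁻¹ * y, QuotientGroup.eq.mp hxy_center, by group⟩
  have hzn : z ^ n = 1 := by
    rw [Commute.mul_pow (Subgroup.mem_center_iff.mp hz x)] at hxy
    simpa using hxy.symm
  rw [eq_one_of_pow_eq_one_of_torsionFree htf (Nat.pos_of_ne_zero hn) hzn, mul_one]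

end TorsionFree

namespace IsRationalMalcevCompletion

variable {N M : Type*} [Group N] [Group M]

theorem isMulTorsionFree {ι : N →* M} (hι : IsRationalMalcevCompletion ι) :
    IsMulTorsionFree M :=
  ⟨fun n hn x y (hxy : x ^ n = y ^ n) =>
    (hι.uniqueRoots (y ^ n) n (Nat.pos_of_ne_zero hn)).unique hxy rfl⟩

theorem mem_of_pow_mem [IsMulTorsionFree M] {S : Subgroup M} {j : N →* S}
    (hj : IsRationalMalcevCompletion j) {x : M} {n : ℕ} (hn : 0 < n) (hx : x ^ n ∈ S) :
    x ∈ S := by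
  obtain ⟨y, hy, -⟩ := hj.uniqueRoots ⟨x ^ n, hx⟩ n hn
  have hyx : (y : M) = x :=
    IsMulTorsionFree.pow_left_injective hn.ne' (by simpa using congrArg Subtype.val hy)
  exact hyx ▸ y.2

theorem injective_quotientGroup_map {ι : N →* M} {K : Subgroup N} [K.Normal]
    {KQ : Subgroup M} [KQ.Normal] {hle : K ≤ KQ.comap ι}
    (hKQ : IsRationalMalcevCompletion
      ((ι.comp K.subtype).codRestrict KQ (fun x => hle x.2)))
    (hι : Function.Injective ι) (htfq : ∀ g : N ⧸ K, g ≠ 1 → ¬IsOfFinOrder g) :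
    Function.Injective (QuotientGroup.map K KQ ι hle) := by
  refine (injective_iff_map_eq_one _).mpr fun q hq => ?_
  obtain ⟨n, rfl⟩ := QuotientGroup.mk_surjective q
  rw [QuotientGroup.map_mk, QuotientGroup.eq_one_iff] at hq
  obtain ⟨k, hk, y, hy⟩ := hKQ.cofinal ⟨ι n, hq⟩
  have hnk : n ^ k ∈ K := by
    have hιy : ι y = ι (n ^ k) := by rw [map_pow]; exact congrArg Subtype.val hy
    exact hι hιy ▸ y.2
  refine eq_one_of_pow_eq_one_of_torsionFree htfq hk ?_
  rwa [← QuotientGroup.mk_pow, QuotientGroup.eq_one_iff]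

end IsRationalMalcevCompletion

theorem malcev_completion_of_quotient_general (N M : Type*) [Group N] [Group M]
    (ι : N →* M) (hι : IsRationalMalcevCompletion ι)
    (K : Subgroup N) [K.Normal] (htfq : ∀ g : N ⧸ K, g ≠ 1 → ¬IsOfFinOrder g)
    (KQ : Subgroup M) [KQ.Normal] (hle : K ≤ Subgroup.comap ι KQ)
    (hKQ : IsRationalMalcevCompletion
      (MonoidHom.codRestrict (ι.comp K.subtype) KQ (fun x => hle x.2))) :
    IsRationalMalcevCompletion (QuotientGroup.map K KQ ι hle) := by
  have := hι.nilpotent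
  have := hι.isMulTorsionFree
  have htfQ : ∀ g : M ⧸ KQ, g ≠ 1 → ¬IsOfFinOrder g :=
    torsionFree_quotient_of_mem_of_pow_mem fun _ _ hn => hKQ.mem_of_pow_mem hn
  have := isMulTorsionFree_of_isNilpotent htfQ
  refine
    { nilpotent := inferInstance
      torsionFree := htfQ
      injective := hKQ.injective_quotientGroup_map hι.injective htfq
      uniqueRoots := fun q k hk => ?_
      cofinal := fun q => ?_ }
  · obtain ⟨m, rfl⟩ := QuotientGroup.mk_surjective q
    obtain ⟨x, hx, -⟩ := hι.uniqueRoots m k hk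
    have hxk : (x : M ⧸ KQ) ^ k = m := by rw [← QuotientGroup.mk_pow, hx]
    exact ⟨x, hxk, fun y (hy : y ^ k = m) =>
      IsMulTorsionFree.pow_left_injective hk.ne' (hy.trans hxk.symm)⟩
  · obtain ⟨m, rfl⟩ := QuotientGroup.mk_surjective q
    obtain ⟨k, hk, n, hn⟩ := hι.cofinal m
    exact ⟨k, hk, n, by rw [QuotientGroup.map_mk, hn, QuotientGroup.mk_pow]⟩

/-- Let `K ⊴ N` with `N/K` torsion-free, and let `K^ℚ ⊴ N^ℚ` be the rational completion of
`K` inside `N^ℚ`. Then the induced map `N/K → N^ℚ/K^ℚ` realizes `N^ℚ/K^ℚ` as the rational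
Malcev completion of `N/K`. -/
theorem malcev_completion_of_quotient (N M : Type*) [Group N] [Group M]
    (hfg : Group.FG N) (htf : ∀ g : N, g ≠ 1 → ¬IsOfFinOrder g) [Group.IsNilpotent N]
    (ι : N →* M) (hι : IsRationalMalcevCompletion ι)
    (K : Subgroup N) [K.Normal] (htfq : ∀ g : N ⧸ K, g ≠ 1 → ¬IsOfFinOrder g)
    (KQ : Subgroup M) [KQ.Normal] (hle : K ≤ Subgroup.comap ι KQ)
    (hKQ : IsRationalMalcevCompletion
      (MonoidHom.codRestrict (ι.comp K.subtype) KQ (fun x => hle x.2))) :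
    IsRationalMalcevCompletion (QuotientGroup.map K KQ ι hle) :=
  malcev_completion_of_quotient_general N M ι hι K htfq KQ hle hKQ
end

section
/- For r, c ≥ 2, the free nilpotent group N_{r,c} of rank r and class c is rationally indecomposable: its rational Malcev completion does not split as a nontrivial direct product. -/
-- `IsMulCommutative` supplies the `CommGroup` instance on `center G` used by `Abelianization.lift`.
open scoped commutatorElement IsMulCommutative
open Subgroup (center mem_center_iff commutator_le commutator_mem_commutator mem_top mem_bot)

section TorsionFreeNilpotent

variable {G : Type*} [Group G]

def centralCommutatorHom (x : G) (hx : ∀ g, ⁅x, g⁆ ∈ center G) : G →* center G where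
  toFun g := ⟨⁅x, g⁆, hx g⟩
  map_one' := by simp
  map_mul' g h := by
    ext
    change ⁅x, g * h⁆ = ⁅x, g⁆ * ⁅x, h⁆
    rw [commutatorElement_mul_right_eq_mul_conj, mul_assoc _ g,
      mem_center_iff.mp (hx h) g, ← mul_assoc, mul_inv_cancel_right]

theorem lowerCentralSeries_succ_eq_bot_of_add_two_eq_bot (htf : ∀ g : G, g ≠ 1 → ¬IsOfFinOrder g)
    (htors : ∀ g : G, IsOfFinOrder (Abelianization.of g)) {n : ℕ}
    (h : (⊤ : Subgroup G).lowerCentralSeries (n + 2) = ⊥) :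
    (⊤ : Subgroup G).lowerCentralSeries (n + 1) = ⊥ := by
  rw [eq_bot_iff, Subgroup.lowerCentralSeries_succ, commutator_le]
  intro x hx g _
  -- `g ↦ ⁅x, g⁆` is a homomorphism into the center, so it factors through the abelianization.
  have hcentral : ∀ g, ⁅x, g⁆ ∈ center G := fun g => mem_center_iff.mpr fun y => by
    have : ⁅⁅x, g⁆, y⁆ ∈ (⊤ : Subgroup G).lowerCentralSeries (n + 2) :=
      commutator_mem_commutator (commutator_mem_commutator hx (mem_top g)) (mem_top y)
    rw [h, mem_bot, commutatorElement_eq_one_iff_mul_comm] at this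
    exact this.symm
  have hfin := (Abelianization.lift (centralCommutatorHom x hcentral)).isOfFinOrder (htors g)
  rw [Abelianization.lift_apply_of] at hfin
  by_contra hne
  exact htf _ hne ((center G).subtype.isOfFinOrder hfin)

theorem exists_not_isOfFinOrder_abelianization_of [Group.IsNilpotent G] [Nontrivial G]
    (htf : ∀ g : G, g ≠ 1 → ¬IsOfFinOrder g) : ∃ g : G, ¬IsOfFinOrder (Abelianization.of g) := by
  by_contra! htors
  have hdescend : ∀ n, (⊤ : Subgroup G).lowerCentralSeries (n + 1) = ⊥ →
      (⊤ : Subgroup G).lowerCentralSeries 1 = ⊥ := by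
    intro n
    induction n with
    | zero => exact id
    | succ n ih => exact fun h => ih (lowerCentralSeries_succ_eq_bot_of_add_two_eq_bot htf htors h)
  obtain ⟨d, hd⟩ := Subgroup.nilpotent_iff_lowerCentralSeries.mp ‹Group.IsNilpotent G›
  have hab : commutator G = ⊥ := by
    rw [← Subgroup.top_lowerCentralSeries_one]
    exact hdescend d (eq_bot_iff.mpr (hd ▸ Subgroup.lowerCentralSeries_antitone _ (Nat.le_succ d)))
  have hinj : Function.Injective (Abelianization.of : G →* Abelianization G) := by
    rw [← MonoidHom.ker_eq_bot_iff, Abelianization.ker_of, hab]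
  obtain ⟨g, hg⟩ := exists_ne (1 : G)
  exact htf g hg (hinj.isOfFinOrder_iff.mp (htors g))

end TorsionFreeNilpotent

@[ext] structure Heisenberg (R : Type*) where
  x : R
  y : R
  z : R

namespace Heisenberg

variable {R : Type*} [CommRing R]

-- `⟨x, y, z⟩` is the unitriangular matrix `[[1, x, z], [0, 1, y], [0, 0, 1]]`.
instance : Mul (Heisenberg R) := ⟨fun g h => ⟨g.x + h.x, g.y + h.y, g.z + h.z + g.x * h.y⟩⟩
instance : One (Heisenberg R) := ⟨⟨0, 0, 0⟩⟩
instance : Inv (Heisenberg R) := ⟨fun g => ⟨-g.x, -g.y, g.x * g.y - g.z⟩⟩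

@[simp] lemma mul_x (g h : Heisenberg R) : (g * h).x = g.x + h.x := rfl
@[simp] lemma mul_y (g h : Heisenberg R) : (g * h).y = g.y + h.y := rfl
@[simp] lemma mul_z (g h : Heisenberg R) : (g * h).z = g.z + h.z + g.x * h.y := rfl
@[simp] lemma one_x : (1 : Heisenberg R).x = 0 := rfl
@[simp] lemma one_y : (1 : Heisenberg R).y = 0 := rfl
@[simp] lemma one_z : (1 : Heisenberg R).z = 0 := rfl
@[simp] lemma inv_x (g : Heisenberg R) : g⁻¹.x = -g.x := rfl
@[simp] lemma inv_y (g : Heisenberg R) : g⁻¹.y = -g.y := rfl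
@[simp] lemma inv_z (g : Heisenberg R) : g⁻¹.z = g.x * g.y - g.z := rfl

instance : Group (Heisenberg R) where
  mul_assoc a b c := by ext <;> simp only [mul_x, mul_y, mul_z] <;> ring
  one_mul a := by ext <;> simp
  mul_one a := by ext <;> simp
  inv_mul_cancel a := by
    ext <;> simp only [mul_x, mul_y, mul_z, inv_x, inv_y, inv_z, one_x, one_y, one_z] <;> ring

lemma commutatorElement_eq (g h : Heisenberg R) :
    ⁅g, h⁆ = ⟨0, 0, g.x * h.y - h.x * g.y⟩ := by
  ext <;> simp [commutatorElement_def]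
  ring

lemma commutator_le_center : commutator (Heisenberg R) ≤ center (Heisenberg R) := by
  rw [commutator_def, commutator_le]
  intro g _ h _
  rw [mem_center_iff]
  intro k
  ext <;> simp [commutatorElement_eq, add_comm]

lemma lowerCentralSeries_two_eq_bot : (⊤ : Subgroup (Heisenberg R)).lowerCentralSeries 2 = ⊥ :=
  Subgroup.lowerCentralSeries_succ_eq_bot _ <| by
    rw [Subgroup.top_lowerCentralSeries_one]
    exact commutator_le_center

def xHom : Heisenberg R →* Multiplicative R where
  toFun g := .ofAdd g.x
  map_one' := rfl
  map_mul' _ _ := rfl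

def yHom : Heisenberg R →* Multiplicative R where
  toFun g := .ofAdd g.y
  map_one' := rfl
  map_mul' _ _ := rfl

end Heisenberg

theorem exists_smul_add_smul_eq_zero_of_mul_eq_mul {R α : Type*} [CommRing R] [Nontrivial R]
    {A B : α → R} (h : ∀ i j, A i * B j = A j * B i) :
    ∃ p q : R, (p ≠ 0 ∨ q ≠ 0) ∧ p • A + q • B = 0 := by
  by_cases hA : A = 0
  · exact ⟨1, 0, .inl one_ne_zero, by simp [hA]⟩
  · obtain ⟨i₀, hi₀⟩ := Function.ne_iff.mp hA
    refine ⟨B i₀, -A i₀, .inr (neg_ne_zero.mpr hi₀), funext fun i => ?_⟩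
    simp only [Pi.add_apply, Pi.smul_apply, smul_eq_mul, Pi.zero_apply]
    linear_combination h i i₀

namespace FreeGroup

variable {α : Type*}

noncomputable def expSum : FreeGroup α →* Multiplicative (α →₀ ℤ) :=
  FreeGroup.lift fun a => .ofAdd (Finsupp.single a 1)

theorem injective_lift_expSum : Function.Injective (Abelianization.lift (expSum (α := α))) := by
  let inv : Multiplicative (α →₀ ℤ) →* Abelianization (FreeGroup α) :=
    AddMonoidHom.toMultiplicativeLeft <|
      Finsupp.liftAddHom fun a => zmultiplesHom _ (.ofMul (Abelianization.of (FreeGroup.of a)))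
  have hinv : inv.comp (Abelianization.lift expSum) = .id _ := by
    refine Abelianization.hom_ext _ _ (FreeGroup.ext_hom _ _ fun a => ?_)
    simp [inv, expSum]
  exact Function.LeftInverse.injective (g := inv) (DFunLike.congr_fun hinv)

noncomputable def toHeisenberg (i j : α) : FreeGroup α →* Heisenberg ℤ :=
  FreeGroup.lift fun a => ⟨Finsupp.single a 1 i, Finsupp.single a 1 j, 0⟩

theorem toHeisenberg_x (i j : α) (w : FreeGroup α) :
    (toHeisenberg i j w).x = (expSum w).toAdd i := by
  have : Heisenberg.xHom.comp (toHeisenberg i j) =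
      (Finsupp.applyAddHom i).toMultiplicative.comp expSum :=
    FreeGroup.ext_hom _ _ fun a => rfl
  exact congrArg Multiplicative.toAdd (DFunLike.congr_fun this w)

theorem toHeisenberg_y (i j : α) (w : FreeGroup α) :
    (toHeisenberg i j w).y = (expSum w).toAdd j := by
  have : Heisenberg.yHom.comp (toHeisenberg i j) =
      (Finsupp.applyAddHom j).toMultiplicative.comp expSum :=
    FreeGroup.ext_hom _ _ fun a => rfl
  exact congrArg Multiplicative.toAdd (DFunLike.congr_fun this w)

theorem expSum_mul_eq_mul_of_commutator_mem {w₁ w₂ : FreeGroup α}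
    (h : ⁅w₁, w₂⁆ ∈ (⊤ : Subgroup (FreeGroup α)).lowerCentralSeries 2) (i j : α) :
    (expSum w₁).toAdd i * (expSum w₂).toAdd j = (expSum w₁).toAdd j * (expSum w₂).toAdd i := by
  have h' : toHeisenberg i j ⁅w₁, w₂⁆ ∈ (⊤ : Subgroup (Heisenberg ℤ)).lowerCentralSeries 2 := by
    have := Subgroup.mem_map_of_mem (toHeisenberg i j) h
    rw [Subgroup.map_lowerCentralSeries] at this
    exact Subgroup.lowerCentralSeries_mono 2 le_top this
  rw [Heisenberg.lowerCentralSeries_two_eq_bot, mem_bot, map_commutatorElement,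
    Heisenberg.commutatorElement_eq] at h'
  have hz := congrArg Heisenberg.z h'
  simp only [Heisenberg.one_z, toHeisenberg_x, toHeisenberg_y] at hz
  linear_combination hz

theorem exists_zpow_mul_zpow_eq_one_of_commutator_mem {w₁ w₂ : FreeGroup α}
    (h : ⁅w₁, w₂⁆ ∈ (⊤ : Subgroup (FreeGroup α)).lowerCentralSeries 2) :
    ∃ p q : ℤ, (p ≠ 0 ∨ q ≠ 0) ∧
      Abelianization.of w₁ ^ p * Abelianization.of w₂ ^ q = 1 := by
  obtain ⟨p, q, hpq, hdep⟩ :=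
    exists_smul_add_smul_eq_zero_of_mul_eq_mul (expSum_mul_eq_mul_of_commutator_mem h)
  refine ⟨p, q, hpq, injective_lift_expSum ?_⟩
  simp only [_root_.map_mul, _root_.map_zpow, Abelianization.lift_apply_of, _root_.map_one]
  exact congrArg Multiplicative.ofAdd (DFunLike.coe_injective hdep)

end FreeGroup

theorem Abelianization.of_map_zpow_mul_zpow_eq_one {G H : Type*} [Group G] [Group H]
    (f : G →* H) {u v : G} {p q : ℤ} (h : of u ^ p * of v ^ q = 1) :
    of (f u) ^ p * of (f v) ^ q = 1 := by
  simpa only [map_mul, map_zpow, map_of, map_one] using congrArg (map f) h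

def CommutingPairsDependent (G : Type*) [Group G] : Prop :=
  ∀ u v : G, Commute u v → ∃ p q : ℤ, (p ≠ 0 ∨ q ≠ 0) ∧
    Abelianization.of u ^ p * Abelianization.of v ^ q = 1

theorem commutingPairsDependent_freeGroup_quotient {α : Type*} {c : ℕ} (hc : 2 ≤ c) :
    CommutingPairsDependent (FreeGroup α ⧸ (⊤ : Subgroup (FreeGroup α)).lowerCentralSeries c) := by
  intro u v huv
  obtain ⟨w₁, rfl⟩ := QuotientGroup.mk_surjective u
  obtain ⟨w₂, rfl⟩ := QuotientGroup.mk_surjective v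
  have hmem : ⁅w₁, w₂⁆ ∈ (⊤ : Subgroup (FreeGroup α)).lowerCentralSeries 2 := by
    refine Subgroup.lowerCentralSeries_antitone _ hc ((QuotientGroup.eq_one_iff _).mp ?_)
    exact (map_commutatorElement (QuotientGroup.mk' _) w₁ w₂).trans
      (commutatorElement_eq_one_iff_commute.mpr huv)
  obtain ⟨p, q, hpq, h⟩ := FreeGroup.exists_zpow_mul_zpow_eq_one_of_commutator_mem hmem
  exact ⟨p, q, hpq, Abelianization.of_map_zpow_mul_zpow_eq_one (QuotientGroup.mk' _) h⟩

theorem CommutingPairsDependent.of_injective {N G : Type*} [Group N] [Group G]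
    (hN : CommutingPairsDependent N) (ι : N →* G) (hinj : Function.Injective ι)
    (hcof : ∀ g : G, ∃ k : ℕ, 0 < k ∧ g ^ k ∈ ι.range) : CommutingPairsDependent G := by
  intro g₁ g₂ hg
  obtain ⟨a, ha, u, hu⟩ := hcof g₁
  obtain ⟨b, hb, v, hv⟩ := hcof g₂
  have huv : Commute u v := hinj <| by
    rw [map_mul, map_mul, hu, hv]
    exact (hg.pow_pow a b).eq
  obtain ⟨p, q, hpq, h⟩ := hN u v huv
  refine ⟨a * p, b * q, ?_, ?_⟩
  · rcases hpq with hp | hq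
    · exact .inl (mul_ne_zero (by exact_mod_cast ha.ne') hp)
    · exact .inr (mul_ne_zero (by exact_mod_cast hb.ne') hq)
  · have := Abelianization.of_map_zpow_mul_zpow_eq_one ι h
    rw [hu, hv] at this
    simpa only [map_pow, zpow_mul, zpow_natCast] using this

theorem not_isOfFinOrder_of_injective {G H : Type*} [Group G] [Group H] {f : G →* H}
    (hf : Function.Injective f) (htf : ∀ h : H, h ≠ 1 → ¬IsOfFinOrder h) (g : G) (hg : g ≠ 1) :
    ¬IsOfFinOrder g :=
  fun hfin => htf (f g) ((map_ne_one_iff f hf).mpr hg) (f.isOfFinOrder hfin)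

theorem not_commutingPairsDependent_prod {H K : Type*} [Group H] [Group K]
    [Group.IsNilpotent H] [Group.IsNilpotent K] [Nontrivial H] [Nontrivial K]
    (htfH : ∀ g : H, g ≠ 1 → ¬IsOfFinOrder g) (htfK : ∀ g : K, g ≠ 1 → ¬IsOfFinOrder g) :
    ¬CommutingPairsDependent (H × K) := by
  obtain ⟨h₀, hh₀⟩ := exists_not_isOfFinOrder_abelianization_of htfH
  obtain ⟨k₀, hk₀⟩ := exists_not_isOfFinOrder_abelianization_of htfK
  intro hdep
  obtain ⟨p, q, hpq, h⟩ := hdep (h₀, 1) (1, k₀) (by ext <;> simp)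
  have hH := Abelianization.of_map_zpow_mul_zpow_eq_one (MonoidHom.fst H K) h
  have hK := Abelianization.of_map_zpow_mul_zpow_eq_one (MonoidHom.snd H K) h
  simp only [MonoidHom.coe_fst, MonoidHom.coe_snd, map_one, one_zpow, mul_one, one_mul] at hH hK
  rcases hpq with hp | hq
  · exact hh₀ (isOfFinOrder_iff_zpow_eq_one.mpr ⟨p, hp, hH⟩)
  · exact hk₀ (isOfFinOrder_iff_zpow_eq_one.mpr ⟨q, hq, hK⟩)

theorem free_nilpotent_rationally_indecomposable_general (r c : ℕ) (hc : 2 ≤ c)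
    (M : Type*) [Group M]
    (ι : (FreeGroup (Fin r) ⧸ (⊤ : Subgroup (FreeGroup (Fin r))).lowerCentralSeries c) →* M)
    (hι : IsRationalMalcevCompletion ι) :
    DirectlyIndecomposable M := by
  intro H K _ _ ⟨e⟩
  by_contra! ⟨_, _⟩
  have := hι.nilpotent
  have : Group.IsNilpotent H :=
    Group.nilpotent_of_surjective ((MonoidHom.fst H K).comp e.toMonoidHom)
      (Prod.fst_surjective.comp e.surjective)
  have : Group.IsNilpotent K :=
    Group.nilpotent_of_surjective ((MonoidHom.snd H K).comp e.toMonoidHom)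
      (Prod.snd_surjective.comp e.surjective)
  refine not_commutingPairsDependent_prod
    (not_isOfFinOrder_of_injective (f := e.symm.toMonoidHom.comp (MonoidHom.inl H K))
      (e.symm.injective.comp (Prod.mk_left_injective 1)) hι.torsionFree)
    (not_isOfFinOrder_of_injective (f := e.symm.toMonoidHom.comp (MonoidHom.inr H K))
      (e.symm.injective.comp (Prod.mk_right_injective 1)) hι.torsionFree) ?_
  exact ((commutingPairsDependent_freeGroup_quotient hc).of_injective ι hι.injective
    hι.cofinal).of_injective e.toMonoidHom e.injective fun g => ⟨1, one_pos, by simp⟩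

/-- For `r, c ≥ 2`, the free nilpotent group `N_{r,c}` of rank `r` and class `c` (the
quotient of the free group of rank `r` by the `(c+1)`-st term of its lower central series,
which is `lowerCentralSeries _ c` in Mathlib's indexing) is rationally indecomposable:
its rational Malcev completion is directly indecomposable. -/
theorem free_nilpotent_rationally_indecomposable (r c : ℕ) (hr : 2 ≤ r) (hc : 2 ≤ c)
    (M : Type*) [Group M]
    (ι : (FreeGroup (Fin r) ⧸ (⊤ : Subgroup (FreeGroup (Fin r))).lowerCentralSeries c) →* M)
    (hι : IsRationalMalcevCompletion ι) :
    DirectlyIndecomposable M :=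
  free_nilpotent_rationally_indecomposable_general r c hc M ι hι
end
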